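/- arXiv:2210.16501 — 2 statements merged into one kernel-verified Lean document; each statement's English description precedes it below -/
import Mathlib

section
/- (Law of conservation of mass, inviscid model.) Let 0 < T, let ρ₀ ∈ ℝ, π₀ ∈ ℝ with π₀ ≠ 0, and for each t ∈ (0,T) let Ω_A(t), Ω_B(t) ⊆ ℝ³ be measurable sets, Γ(t) ⊆ ℝ³ a set of finite 2-dimensional Hausdorff measure ℋ², and ∂Ω ⊆ ℝ³ a fixed set. Let ρ_A, ρ_B, π_A, π_B : ℝ³ × (0,T) → ℝ and v_A, v_B, v_S, n_Γ, n_Ω : ℝ³ × (0,T) → ℝ³ and H_Γ : ℝ³ × (0,T) → ℝ be smooth, with all integrands below integrable. Define m_A(t) = ∫_{Ω_A(t)} ρ_A(x,t) dx, m_B(t) = ∫_{Ω_B(t)} ρ_B(x,t) dx, σ(t) = ℋ²(Γ(t)). Assume for every t ∈ (0,T): (transport theorems) m_A has derivative ∫_{Ω_A(t)} D_t^A ρ_A dx at t, m_B has derivative ∫_{Ω_B(t)} (D_t^B ρ_B + (div v_B) ρ_B) dx at t, and σ has derivative ∫_{Γ(t)} div_Γ v_S dℋ² at t; (surface divergence theorem)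 ∫_{Γ(t)} div_Γ v_S dℋ² = −∫_{Γ(t)} H_Γ (v_S·n_Γ) dℋ²; (divergence theorems) ∫_{Ω_A(t)} div(π_A v_A) dx = ∫_{Γ(t)} π_A (v_A·n_Γ) dℋ² and ∫_{Ω_B(t)} div(π_B v_B) dx = ∫_{∂Ω} π_B (v_B·n_Ω) dℋ² − ∫_{Γ(t)} π_B (v_B·n_Γ) dℋ²; (equations) D_t^A ρ_A = div((ρ₀/π₀) π_A v_A) on Ω_A(t), D_t^B ρ_B + (div v_B) ρ_B = div((ρ₀/π₀) π_B v_B) on Ω_B(t), π₀ H_Γ n_Γ − π_A n_Γ + π_B n_Γ = 0 on Γ(t) with n_Γ ≠ 0 there; (restrictions) div v_A = 0 on Ω_A(t), v_B·n_Ω = 0 on ∂Ω, and v_A·n_Γ = v_S·n_Γ and v_B·n_Γ = v_S·n_Γ on Γ(t). Then for all 0 < t₁ < t₂ < T, m_A(t₂) + m_B(t₂) + ρ₀ σ(t₂) = m_A(t₁) + m_B(t₁) + ρ₀ σ(t₁). -/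
open Matrix MeasureTheory

noncomputable section

/-- Space-time points `(x,t) ∈ ℝ³ × ℝ`. -/
abbrev Pt := (Fin 3 → ℝ) × ℝ

/-- Time derivative `∂_t f`. -/
def ptd (f : Pt → ℝ) (p : Pt) : ℝ := fderiv ℝ f p ((0 : Fin 3 → ℝ), (1 : ℝ))

/-- Spatial partial derivative `∂_j f`. -/
def pdx (j : Fin 3) (f : Pt → ℝ) (p : Pt) : ℝ := fderiv ℝ f p (Pi.single j 1, (0 : ℝ))

/-- Spatial velocity gradient matrix `(∇v)_{ij} = ∂v_i/∂x_j`. -/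
def gradx (v : Pt → Fin 3 → ℝ) (p : Pt) : Matrix (Fin 3) (Fin 3) ℝ :=
  fun i j => pdx j (fun q => v q i) p

/-- Spatial divergence `div v = ∂_1 v_1 + ∂_2 v_2 + ∂_3 v_3`. -/
def divx (v : Pt → Fin 3 → ℝ) (p : Pt) : ℝ := ∑ i, gradx v p i i

/-- Rate-of-strain tensor `D(v) = ((∇v) + ᵗ(∇v))/2` in the spatial variables. -/
def strainx (v : Pt → Fin 3 → ℝ) (p : Pt) : Matrix (Fin 3) (Fin 3) ℝ :=
  (1 / 2 : ℝ) • (gradx v p + (gradx v p)ᵀ)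

/-- Convective term `(u·∇)f = u_1 ∂_1 f + u_2 ∂_2 f + u_3 ∂_3 f`. -/
def convD (u : Pt → Fin 3 → ℝ) (f : Pt → ℝ) (p : Pt) : ℝ := ∑ j, u p j * pdx j f p

/-- Material derivative `D_t f = ∂_t f + (u·∇)f`. -/
def matD (u : Pt → Fin 3 → ℝ) (f : Pt → ℝ) (p : Pt) : ℝ := ptd f p + convD u f p

/-- Directional derivative `(n·∇)w` of a vector field in the spatial variables. -/
def dirDx (n : Fin 3 → ℝ) (w : Pt → Fin 3 → ℝ) (p : Pt) : Fin 3 → ℝ :=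
  fun i => ∑ j, n j * gradx w p i j

/-- Surface divergence `div_Γ w = div w − n_Γ·((n_Γ·∇)w)`. -/
def sdivx (n : Pt → Fin 3 → ℝ) (w : Pt → Fin 3 → ℝ) (p : Pt) : ℝ :=
  divx w p - n p ⬝ᵥ dirDx (n p) w p

lemma fderiv_cmul (c : ℝ) (f : Pt → ℝ) (p : Pt) :
    fderiv ℝ (fun q => c * f q) p = c • fderiv ℝ f p := by
  by_cases hc : c = 0
  · simp [hc]
  by_cases hf : DifferentiableAt ℝ f p
  · exact fderiv_const_mul hf c
  · rw [fderiv_zero_of_not_differentiableAt hf, smul_zero,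
      fderiv_zero_of_not_differentiableAt]
    intro h
    exact hf (by simpa [inv_mul_cancel_left₀ hc] using h.const_mul c⁻¹)

lemma pdx_cmul (j : Fin 3) (c : ℝ) (f : Pt → ℝ) (p : Pt) :
    pdx j (fun q => c * f q) p = c * pdx j f p := by
  unfold pdx
  rw [fderiv_cmul]; rfl

lemma divx_const_smul (c : ℝ) (w : Pt → Fin 3 → ℝ) (p : Pt) :
    divx (fun q => c • w q) p = c * divx w p := by
  unfold divx gradx
  rw [Finset.mul_sum]
  refine Finset.sum_congr rfl fun i _ => ?_
  have : (fun q => (c • w q) i) = fun q => c * w q i := by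
    funext q; simp [Pi.smul_apply]
  rw [this, pdx_cmul]

lemma contslice {T : ℝ} {f : Pt → ℝ} (hf : ContDiffOn ℝ (⊤ : ℕ∞) f (Set.univ ×ˢ Set.Ioo 0 T))
    {t : ℝ} (ht : t ∈ Set.Ioo 0 T) : Continuous fun x : Fin 3 → ℝ => f (x, t) :=
  hf.continuousOn.comp_continuous (continuous_id.prodMk continuous_const)
    fun x => ⟨Set.mem_univ x, ht⟩

lemma contsliceV {T : ℝ} {f : Pt → Fin 3 → ℝ} (hf : ContDiffOn ℝ (⊤ : ℕ∞) f (Set.univ ×ˢ Set.Ioo 0 T))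
    {t : ℝ} (ht : t ∈ Set.Ioo 0 T) : Continuous fun x : Fin 3 → ℝ => f (x, t) :=
  hf.continuousOn.comp_continuous (continuous_id.prodMk continuous_const)
    fun x => ⟨Set.mem_univ x, ht⟩

lemma ae_restrict_eq_of_eqOn {μ : Measure (Fin 3 → ℝ)} {s : Set (Fin 3 → ℝ)}
    {g h : (Fin 3 → ℝ) → ℝ} (hg : Continuous g) (hh : Continuous h)
    (H : ∀ x ∈ s, g x = h x) : g =ᵐ[μ.restrict s] h := by
  rw [Filter.EventuallyEq, ae_iff]
  have hm : MeasurableSet {x | ¬ g x = h x} :=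
    (isClosed_eq hg hh).measurableSet.compl
  rw [Measure.restrict_apply hm]
  have : {x | ¬ g x = h x} ∩ s = ∅ := by
    ext x; simp only [Set.mem_inter_iff, Set.mem_empty_iff_false, Set.mem_setOf_eq, iff_false]
    rintro ⟨hne, hx⟩; exact hne (H x hx)
  rw [this, measure_empty]

/-- Law of conservation of mass for the inviscid multiphase flow system with
phase transition. -/
theorem statement15
    (T : ℝ) (hT : 0 < T) (ρ₀ π₀ : ℝ) (hπ₀ : π₀ ≠ 0)
    (ΩA ΩB Γ : ℝ → Set (Fin 3 → ℝ)) (bΩ : Set (Fin 3 → ℝ))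
    (ρA ρB πA πB HΓ : Pt → ℝ) (vA vB vS nΓ nΩ : Pt → Fin 3 → ℝ)
    -- measurability and finiteness
    (hΩAm : ∀ t ∈ Set.Ioo 0 T, MeasurableSet (ΩA t))
    (hΩBm : ∀ t ∈ Set.Ioo 0 T, MeasurableSet (ΩB t))
    (hΓfin : ∀ t ∈ Set.Ioo 0 T, μH[2] (Γ t) < ⊤)
    -- smoothness on ℝ³ × (0,T)
    (hρA : ContDiffOn ℝ (⊤ : ℕ∞) ρA (Set.univ ×ˢ Set.Ioo 0 T))
    (hρB : ContDiffOn ℝ (⊤ : ℕ∞) ρB (Set.univ ×ˢ Set.Ioo 0 T))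
    (hπA : ContDiffOn ℝ (⊤ : ℕ∞) πA (Set.univ ×ˢ Set.Ioo 0 T))
    (hπB : ContDiffOn ℝ (⊤ : ℕ∞) πB (Set.univ ×ˢ Set.Ioo 0 T))
    (hHΓ : ContDiffOn ℝ (⊤ : ℕ∞) HΓ (Set.univ ×ˢ Set.Ioo 0 T))
    (hvA : ContDiffOn ℝ (⊤ : ℕ∞) vA (Set.univ ×ˢ Set.Ioo 0 T))
    (hvB : ContDiffOn ℝ (⊤ : ℕ∞) vB (Set.univ ×ˢ Set.Ioo 0 T))
    (hvS : ContDiffOn ℝ (⊤ : ℕ∞) vS (Set.univ ×ˢ Set.Ioo 0 T))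
    (hnΓ : ContDiffOn ℝ (⊤ : ℕ∞) nΓ (Set.univ ×ˢ Set.Ioo 0 T))
    (hnΩ : ContDiffOn ℝ (⊤ : ℕ∞) nΩ (Set.univ ×ˢ Set.Ioo 0 T))
    -- the masses and the surface area
    (mA mB σ : ℝ → ℝ)
    (hmA : ∀ t ∈ Set.Ioo 0 T, mA t = ∫ x in ΩA t, ρA (x, t))
    (hmB : ∀ t ∈ Set.Ioo 0 T, mB t = ∫ x in ΩB t, ρB (x, t))
    (hσ : ∀ t ∈ Set.Ioo 0 T, σ t = (μH[2] (Γ t)).toReal)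
    -- integrability of the integrands below
    (hiA : ∀ t ∈ Set.Ioo 0 T, IntegrableOn (fun x => ρA (x, t)) (ΩA t))
    (hiB : ∀ t ∈ Set.Ioo 0 T, IntegrableOn (fun x => ρB (x, t)) (ΩB t))
    (hiA' : ∀ t ∈ Set.Ioo 0 T, IntegrableOn (fun x => matD vA ρA (x, t)) (ΩA t))
    (hiB' : ∀ t ∈ Set.Ioo 0 T,
      IntegrableOn (fun x => matD vB ρB (x, t) + divx vB (x, t) * ρB (x, t)) (ΩB t))
    (hiΓ : ∀ t ∈ Set.Ioo 0 T, IntegrableOn (fun x => sdivx nΓ vS (x, t)) (Γ t) μH[2])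
    (hiΓ' : ∀ t ∈ Set.Ioo 0 T,
      IntegrableOn (fun x => HΓ (x, t) * (vS (x, t) ⬝ᵥ nΓ (x, t))) (Γ t) μH[2])
    (hiΓA : ∀ t ∈ Set.Ioo 0 T,
      IntegrableOn (fun x => πA (x, t) * (vA (x, t) ⬝ᵥ nΓ (x, t))) (Γ t) μH[2])
    (hiΓB : ∀ t ∈ Set.Ioo 0 T,
      IntegrableOn (fun x => πB (x, t) * (vB (x, t) ⬝ᵥ nΓ (x, t))) (Γ t) μH[2])
    (hibΩ : ∀ t ∈ Set.Ioo 0 T,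
      IntegrableOn (fun x => πB (x, t) * (vB (x, t) ⬝ᵥ nΩ (x, t))) bΩ μH[2])
    -- transport theorems
    (htrA : ∀ t ∈ Set.Ioo 0 T, HasDerivAt mA (∫ x in ΩA t, matD vA ρA (x, t)) t)
    (htrB : ∀ t ∈ Set.Ioo 0 T,
      HasDerivAt mB (∫ x in ΩB t, (matD vB ρB (x, t) + divx vB (x, t) * ρB (x, t))) t)
    (htrS : ∀ t ∈ Set.Ioo 0 T,
      HasDerivAt σ (∫ x in Γ t, sdivx nΓ vS (x, t) ∂μH[2]) t)
    -- surface divergence theorem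
    (hsdt : ∀ t ∈ Set.Ioo 0 T,
      ∫ x in Γ t, sdivx nΓ vS (x, t) ∂μH[2]
        = -∫ x in Γ t, HΓ (x, t) * (vS (x, t) ⬝ᵥ nΓ (x, t)) ∂μH[2])
    -- divergence theorems
    (hdtA : ∀ t ∈ Set.Ioo 0 T,
      ∫ x in ΩA t, divx (fun q => πA q • vA q) (x, t)
        = ∫ x in Γ t, πA (x, t) * (vA (x, t) ⬝ᵥ nΓ (x, t)) ∂μH[2])
    (hdtB : ∀ t ∈ Set.Ioo 0 T,
      ∫ x in ΩB t, divx (fun q => πB q • vB q) (x, t)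
        = (∫ x in bΩ, πB (x, t) * (vB (x, t) ⬝ᵥ nΩ (x, t)) ∂μH[2])
          - ∫ x in Γ t, πB (x, t) * (vB (x, t) ⬝ᵥ nΓ (x, t)) ∂μH[2])
    -- equations
    (heqA : ∀ t ∈ Set.Ioo 0 T, ∀ x ∈ ΩA t,
      matD vA ρA (x, t) = divx (fun q => (ρ₀ / π₀) • (πA q • vA q)) (x, t))
    (heqB : ∀ t ∈ Set.Ioo 0 T, ∀ x ∈ ΩB t,
      matD vB ρB (x, t) + divx vB (x, t) * ρB (x, t)
        = divx (fun q => (ρ₀ / π₀) • (πB q • vB q)) (x, t))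
    (heqΓ : ∀ t ∈ Set.Ioo 0 T, ∀ x ∈ Γ t,
      (π₀ * HΓ (x, t)) • nΓ (x, t) - πA (x, t) • nΓ (x, t) + πB (x, t) • nΓ (x, t) = 0
        ∧ nΓ (x, t) ≠ 0)
    -- restrictions
    (hrA : ∀ t ∈ Set.Ioo 0 T, ∀ x ∈ ΩA t, divx vA (x, t) = 0)
    (hrΩ : ∀ t ∈ Set.Ioo 0 T, ∀ x ∈ bΩ, vB (x, t) ⬝ᵥ nΩ (x, t) = 0)
    (hrΓ : ∀ t ∈ Set.Ioo 0 T, ∀ x ∈ Γ t,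
      vA (x, t) ⬝ᵥ nΓ (x, t) = vS (x, t) ⬝ᵥ nΓ (x, t)
        ∧ vB (x, t) ⬝ᵥ nΓ (x, t) = vS (x, t) ⬝ᵥ nΓ (x, t)) :
    ∀ t₁ t₂ : ℝ, 0 < t₁ → t₁ < t₂ → t₂ < T →
      mA t₂ + mB t₂ + ρ₀ * σ t₂ = mA t₁ + mB t₁ + ρ₀ * σ t₁ := by
  intro t₁ t₂ h1 h12 h2T
  set E : ℝ → ℝ := fun t => mA t + mB t + ρ₀ * σ t with hE
  set c : ℝ := ρ₀ / π₀ with hc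
  have hderiv : ∀ t ∈ Set.Ioo 0 T, HasDerivAt E 0 t := by
    intro t ht
    -- continuity of slices
    have cπA := contslice hπA ht
    have cπB := contslice hπB ht
    have cH := contslice hHΓ ht
    have cvA := contsliceV hvA ht
    have cvB := contsliceV hvB ht
    have cvS := contsliceV hvS ht
    have cnΓ := contsliceV hnΓ ht
    have cnΩ := contsliceV hnΩ ht
    have cdot : ∀ (u w : Pt → Fin 3 → ℝ),
        (Continuous fun x : Fin 3 → ℝ => u (x, t)) →
        (Continuous fun x : Fin 3 → ℝ => w (x, t)) →
        Continuous fun x : Fin 3 → ℝ => u (x, t) ⬝ᵥ w (x, t) := by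
      intro u w hu hw
      unfold dotProduct
      exact continuous_finset_sum _ fun i _ =>
        ((continuous_apply i).comp hu).mul ((continuous_apply i).comp hw)
    -- value of mA'
    have hIA : (∫ x in ΩA t, matD vA ρA (x, t))
        = c * ∫ x in Γ t, πA (x, t) * (vA (x, t) ⬝ᵥ nΓ (x, t)) ∂μH[2] := by
      rw [← hdtA t ht, ← integral_const_mul]
      refine setIntegral_congr_fun (hΩAm t ht) fun x hx => ?_
      rw [heqA t ht x hx, divx_const_smul]
    -- value of mB'
    have hbΩ0 : (∫ x in bΩ, πB (x, t) * (vB (x, t) ⬝ᵥ nΩ (x, t)) ∂μH[2]) = 0 := by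
      rw [integral_congr_ae (g := fun _ => (0 : ℝ))
        (ae_restrict_eq_of_eqOn (g := fun x => πB (x, t) * (vB (x, t) ⬝ᵥ nΩ (x, t))) (cπB.mul (cdot vB nΩ cvB cnΩ)) continuous_const
          (fun x hx => by rw [hrΩ t ht x hx, mul_zero]))]
      simp
    have hIB : (∫ x in ΩB t, (matD vB ρB (x, t) + divx vB (x, t) * ρB (x, t)))
        = -(c * ∫ x in Γ t, πB (x, t) * (vB (x, t) ⬝ᵥ nΓ (x, t)) ∂μH[2]) := by
      have : (∫ x in ΩB t, (matD vB ρB (x, t) + divx vB (x, t) * ρB (x, t)))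
          = c * ∫ x in ΩB t, divx (fun q => πB q • vB q) (x, t) := by
        rw [← integral_const_mul]
        refine setIntegral_congr_fun (hΩBm t ht) fun x hx => ?_
        rw [heqB t ht x hx, divx_const_smul]
      rw [this, hdtB t ht, hbΩ0, zero_sub, mul_neg]
    -- combine the Γ integrals using the interface equation
    have hΓeq : (∫ x in Γ t, πA (x, t) * (vA (x, t) ⬝ᵥ nΓ (x, t)) ∂μH[2])
        - (∫ x in Γ t, πB (x, t) * (vB (x, t) ⬝ᵥ nΓ (x, t)) ∂μH[2])
        = π₀ * ∫ x in Γ t, HΓ (x, t) * (vS (x, t) ⬝ᵥ nΓ (x, t)) ∂μH[2] := by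
      rw [← integral_sub (hiΓA t ht) (hiΓB t ht), ← integral_const_mul]
      refine integral_congr_ae (ae_restrict_eq_of_eqOn
        (g := fun x => πA (x, t) * (vA (x, t) ⬝ᵥ nΓ (x, t)) - πB (x, t) * (vB (x, t) ⬝ᵥ nΓ (x, t)))
        (h := fun x => π₀ * (HΓ (x, t) * (vS (x, t) ⬝ᵥ nΓ (x, t))))
        ((cπA.mul (cdot vA nΓ cvA cnΓ)).sub (cπB.mul (cdot vB nΓ cvB cnΓ)))
        (continuous_const.mul (cH.mul (cdot vS nΓ cvS cnΓ))) fun x hx => ?_)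
      obtain ⟨heq, hne⟩ := heqΓ t ht x hx
      obtain ⟨hA, hB⟩ := hrΓ t ht x hx
      have hsc : π₀ * HΓ (x, t) - πA (x, t) + πB (x, t) = 0 := by
        have : (π₀ * HΓ (x, t) - πA (x, t) + πB (x, t)) • nΓ (x, t) = 0 := by
          rw [add_smul, sub_smul]; exact heq
        exact (smul_eq_zero.mp this).resolve_right hne
      have hπ : πA (x, t) = πB (x, t) + π₀ * HΓ (x, t) := by linarith
      rw [hA, hB, hπ]; ring
    -- derivative of E
    have hD : HasDerivAt E
        ((∫ x in ΩA t, matD vA ρA (x, t))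
          + (∫ x in ΩB t, (matD vB ρB (x, t) + divx vB (x, t) * ρB (x, t)))
          + ρ₀ * ∫ x in Γ t, sdivx nΓ vS (x, t) ∂μH[2]) t :=
      ((htrA t ht).add (htrB t ht)).add ((htrS t ht).const_mul ρ₀)
    have hzero : (∫ x in ΩA t, matD vA ρA (x, t))
          + (∫ x in ΩB t, (matD vB ρB (x, t) + divx vB (x, t) * ρB (x, t)))
          + ρ₀ * ∫ x in Γ t, sdivx nΓ vS (x, t) ∂μH[2] = 0 := by
      rw [hIA, hIB, hsdt t ht]
      have hcπ : c * π₀ = ρ₀ := div_mul_cancel₀ ρ₀ hπ₀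
      linear_combination c * hΓeq
        + (∫ x in Γ t, HΓ (x, t) * (vS (x, t) ⬝ᵥ nΓ (x, t)) ∂μH[2]) * hcπ
    exact hzero ▸ hD
  -- conclude constancy on [t₁, t₂]
  have hsub : Set.Icc t₁ t₂ ⊆ Set.Ioo 0 T := fun x hx =>
    ⟨lt_of_lt_of_le h1 hx.1, lt_of_le_of_lt hx.2 h2T⟩
  have hcont : ContinuousOn E (Set.Icc t₁ t₂) := fun x hx =>
    ((hderiv x (hsub hx)).continuousAt).continuousWithinAt
  have hder : ∀ x ∈ Set.Ico t₁ t₂, HasDerivWithinAt E 0 (Set.Ici x) x := fun x hx =>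
    (hderiv x (hsub ⟨hx.1, le_of_lt hx.2⟩)).hasDerivWithinAt
  have := constant_of_has_deriv_right_zero hcont hder t₂ (Set.right_mem_Icc.mpr (le_of_lt h12))
  simpa [hE] using this
end
end

section
/- (Law of conservation of mass, viscous model.) Let 0 < T, let ρ₀ ∈ ℝ, π₀ ∈ ℝ with π₀ ≠ 0, and for each t ∈ (0,T) let Ω_A(t), Ω_B(t) ⊆ ℝ³ be measurable sets, Γ(t) ⊆ ℝ³ a set of finite 2-dimensional Hausdorff measure ℋ², and ∂Ω ⊆ ℝ³ a fixed set. Let ρ_A, ρ_B, π_A, π_B, μ_A, μ_B, λ_B : ℝ³ × (0,T) → ℝ and v_A, v_B, v_S, n_Γ, n_Ω : ℝ³ × (0,T) → ℝ³ and H_Γ : ℝ³ × (0,T) → ℝ be smooth, with all integrands below integrable. Set 𝒯_A = μ_A D(v_A) − π_A I₃, 𝒯_B = μ_B D(v_B) + λ_B (div v_B) I₃ − π_B I₃, 𝒯̃_A = μ_A (n_Γ·(n_Γ·∇)v_A) − π_A, 𝒯̃_B = μ_B (n_Γ·(n_Γ·∇)v_B) + λ_B (div v_B) − π_B. Define m_A(t)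 = ∫_{Ω_A(t)} ρ_A(x,t) dx, m_B(t) = ∫_{Ω_B(t)} ρ_B(x,t) dx, σ(t) = ℋ²(Γ(t)). Assume for every t ∈ (0,T): (transport theorems) m_A has derivative ∫_{Ω_A(t)} D_t^A ρ_A dx at t, m_B has derivative ∫_{Ω_B(t)} (D_t^B ρ_B + (div v_B) ρ_B) dx at t, and σ has derivative ∫_{Γ(t)} div_Γ v_S dℋ² at t; (surface divergence theorem) ∫_{Γ(t)} div_Γ v_S dℋ² = −∫_{Γ(t)} H_Γ (v_S·n_Γ) dℋ²; (divergence theorems) ∫_{Ω_A(t)} div(𝒯_A v_A) dx = ∫_{Γ(t)} 𝒯_A v_A·n_Γ dℋ² and ∫_{Ω_B(t)} div(𝒯_B v_B) dx = ∫_{∂Ω} 𝒯_B v_B·n_Ω dℋ² − ∫_{Γ(t)} 𝒯_B v_B·n_Γ dℋ²; (equations) D_t^A ρ_A = −(ρ₀/π₀) div(𝒯_A v_A) on Ω_A(t), D_t^B ρ_B + (div v_B) ρ_B = −(ρ₀/π₀) div(𝒯_B v_B) on Ω_B(t), π₀ H_Γ n_Γ + 𝒯̃_A n_Γ − 𝒯̃_B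 n_Γ = 0 on Γ(t) with |n_Γ| = 1 there; (restrictions) div v_A = 0 on Ω_A(t), v_B = 0 on ∂Ω, and on Γ(t): v_A·n_Γ = v_S·n_Γ, v_B·n_Γ = v_S·n_Γ, P_Γ v_A = 0 and P_Γ v_B = 0. Then for all 0 < t₁ < t₂ < T, m_A(t₂) + m_B(t₂) + ρ₀ σ(t₂) = m_A(t₁) + m_B(t₁) + ρ₀ σ(t₁). -/
open Matrix MeasureTheory

noncomputable section

/-- Quadratic form of the strain tensor equals the normal directional derivative pairing. -/
lemma quad_strain (v : Pt → Fin 3 → ℝ) (p : Pt) (n : Fin 3 → ℝ) :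
    (strainx v p *ᵥ n) ⬝ᵥ n = n ⬝ᵥ dirDx n v p := by
  simp only [strainx, dirDx, Matrix.mulVec, dotProduct, Fin.sum_univ_three,
    Matrix.smul_apply, Matrix.add_apply, Matrix.transpose_apply, smul_eq_mul]
  ring

/-- Law of conservation of mass for the viscous multiphase flow system with
phase transition. -/
theorem statement16
    (T : ℝ) (hT : 0 < T) (ρ₀ π₀ : ℝ) (hπ₀ : π₀ ≠ 0)
    (ΩA ΩB Γ : ℝ → Set (Fin 3 → ℝ)) (bΩ : Set (Fin 3 → ℝ))
    (ρA ρB πA πB μA μB lamB HΓ : Pt → ℝ) (vA vB vS nΓ nΩ : Pt → Fin 3 → ℝ)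
    -- the stress tensors
    (TA TB : Pt → Matrix (Fin 3) (Fin 3) ℝ) (tTA tTB : Pt → ℝ)
    (hTA : ∀ p, TA p = μA p • strainx vA p - πA p • (1 : Matrix (Fin 3) (Fin 3) ℝ))
    (hTB : ∀ p, TB p = μB p • strainx vB p
      + (lamB p * divx vB p) • (1 : Matrix (Fin 3) (Fin 3) ℝ)
      - πB p • (1 : Matrix (Fin 3) (Fin 3) ℝ))
    (htTA : ∀ p, tTA p = μA p * (nΓ p ⬝ᵥ dirDx (nΓ p) vA p) - πA p)
    (htTB : ∀ p, tTB p = μB p * (nΓ p ⬝ᵥ dirDx (nΓ p) vB p) + lamB p * divx vB p - πB p)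
    -- measurability and finiteness
    (hΩAm : ∀ t ∈ Set.Ioo 0 T, MeasurableSet (ΩA t))
    (hΩBm : ∀ t ∈ Set.Ioo 0 T, MeasurableSet (ΩB t))
    (hΓfin : ∀ t ∈ Set.Ioo 0 T, μH[2] (Γ t) < ⊤)
    -- smoothness on ℝ³ × (0,T)
    (hρA : ContDiffOn ℝ (⊤ : ℕ∞) ρA (Set.univ ×ˢ Set.Ioo 0 T))
    (hρB : ContDiffOn ℝ (⊤ : ℕ∞) ρB (Set.univ ×ˢ Set.Ioo 0 T))
    (hπA : ContDiffOn ℝ (⊤ : ℕ∞) πA (Set.univ ×ˢ Set.Ioo 0 T))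
    (hπB : ContDiffOn ℝ (⊤ : ℕ∞) πB (Set.univ ×ˢ Set.Ioo 0 T))
    (hμA : ContDiffOn ℝ (⊤ : ℕ∞) μA (Set.univ ×ˢ Set.Ioo 0 T))
    (hμB : ContDiffOn ℝ (⊤ : ℕ∞) μB (Set.univ ×ˢ Set.Ioo 0 T))
    (hlamB : ContDiffOn ℝ (⊤ : ℕ∞) lamB (Set.univ ×ˢ Set.Ioo 0 T))
    (hHΓ : ContDiffOn ℝ (⊤ : ℕ∞) HΓ (Set.univ ×ˢ Set.Ioo 0 T))
    (hvA : ContDiffOn ℝ (⊤ : ℕ∞) vA (Set.univ ×ˢ Set.Ioo 0 T))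
    (hvB : ContDiffOn ℝ (⊤ : ℕ∞) vB (Set.univ ×ˢ Set.Ioo 0 T))
    (hvS : ContDiffOn ℝ (⊤ : ℕ∞) vS (Set.univ ×ˢ Set.Ioo 0 T))
    (hnΓ : ContDiffOn ℝ (⊤ : ℕ∞) nΓ (Set.univ ×ˢ Set.Ioo 0 T))
    (hnΩ : ContDiffOn ℝ (⊤ : ℕ∞) nΩ (Set.univ ×ˢ Set.Ioo 0 T))
    -- the masses and the surface area
    (mA mB σ : ℝ → ℝ)
    (hmA : ∀ t ∈ Set.Ioo 0 T, mA t = ∫ x in ΩA t, ρA (x, t))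
    (hmB : ∀ t ∈ Set.Ioo 0 T, mB t = ∫ x in ΩB t, ρB (x, t))
    (hσ : ∀ t ∈ Set.Ioo 0 T, σ t = (μH[2] (Γ t)).toReal)
    -- integrability of the integrands below
    (hiA : ∀ t ∈ Set.Ioo 0 T, IntegrableOn (fun x => ρA (x, t)) (ΩA t))
    (hiB : ∀ t ∈ Set.Ioo 0 T, IntegrableOn (fun x => ρB (x, t)) (ΩB t))
    (hiA' : ∀ t ∈ Set.Ioo 0 T, IntegrableOn (fun x => matD vA ρA (x, t)) (ΩA t))
    (hiB' : ∀ t ∈ Set.Ioo 0 T,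
      IntegrableOn (fun x => matD vB ρB (x, t) + divx vB (x, t) * ρB (x, t)) (ΩB t))
    (hiΓ : ∀ t ∈ Set.Ioo 0 T, IntegrableOn (fun x => sdivx nΓ vS (x, t)) (Γ t) μH[2])
    (hiΓ' : ∀ t ∈ Set.Ioo 0 T,
      IntegrableOn (fun x => HΓ (x, t) * (vS (x, t) ⬝ᵥ nΓ (x, t))) (Γ t) μH[2])
    (hiΓA : ∀ t ∈ Set.Ioo 0 T,
      IntegrableOn (fun x => (TA (x, t) *ᵥ vA (x, t)) ⬝ᵥ nΓ (x, t)) (Γ t) μH[2])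
    (hiΓB : ∀ t ∈ Set.Ioo 0 T,
      IntegrableOn (fun x => (TB (x, t) *ᵥ vB (x, t)) ⬝ᵥ nΓ (x, t)) (Γ t) μH[2])
    (hibΩ : ∀ t ∈ Set.Ioo 0 T,
      IntegrableOn (fun x => (TB (x, t) *ᵥ vB (x, t)) ⬝ᵥ nΩ (x, t)) bΩ μH[2])
    -- transport theorems
    (htrA : ∀ t ∈ Set.Ioo 0 T, HasDerivAt mA (∫ x in ΩA t, matD vA ρA (x, t)) t)
    (htrB : ∀ t ∈ Set.Ioo 0 T,
      HasDerivAt mB (∫ x in ΩB t, (matD vB ρB (x, t) + divx vB (x, t) * ρB (x, t))) t)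
    (htrS : ∀ t ∈ Set.Ioo 0 T,
      HasDerivAt σ (∫ x in Γ t, sdivx nΓ vS (x, t) ∂μH[2]) t)
    -- surface divergence theorem
    (hsdt : ∀ t ∈ Set.Ioo 0 T,
      ∫ x in Γ t, sdivx nΓ vS (x, t) ∂μH[2]
        = -∫ x in Γ t, HΓ (x, t) * (vS (x, t) ⬝ᵥ nΓ (x, t)) ∂μH[2])
    -- divergence theorems
    (hdtA : ∀ t ∈ Set.Ioo 0 T,
      ∫ x in ΩA t, divx (fun q => TA q *ᵥ vA q) (x, t)
        = ∫ x in Γ t, (TA (x, t) *ᵥ vA (x, t)) ⬝ᵥ nΓ (x, t) ∂μH[2])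
    (hdtB : ∀ t ∈ Set.Ioo 0 T,
      ∫ x in ΩB t, divx (fun q => TB q *ᵥ vB q) (x, t)
        = (∫ x in bΩ, (TB (x, t) *ᵥ vB (x, t)) ⬝ᵥ nΩ (x, t) ∂μH[2])
          - ∫ x in Γ t, (TB (x, t) *ᵥ vB (x, t)) ⬝ᵥ nΓ (x, t) ∂μH[2])
    -- equations
    (heqA : ∀ t ∈ Set.Ioo 0 T, ∀ x ∈ ΩA t,
      matD vA ρA (x, t) = -(ρ₀ / π₀) * divx (fun q => TA q *ᵥ vA q) (x, t))
    (heqB : ∀ t ∈ Set.Ioo 0 T, ∀ x ∈ ΩB t,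
      matD vB ρB (x, t) + divx vB (x, t) * ρB (x, t)
        = -(ρ₀ / π₀) * divx (fun q => TB q *ᵥ vB q) (x, t))
    (heqΓ : ∀ t ∈ Set.Ioo 0 T, ∀ x ∈ Γ t,
      (π₀ * HΓ (x, t)) • nΓ (x, t) + tTA (x, t) • nΓ (x, t) - tTB (x, t) • nΓ (x, t) = 0
        ∧ nΓ (x, t) ⬝ᵥ nΓ (x, t) = 1)
    -- restrictions
    (hrA : ∀ t ∈ Set.Ioo 0 T, ∀ x ∈ ΩA t, divx vA (x, t) = 0)
    (hrΩ : ∀ t ∈ Set.Ioo 0 T, ∀ x ∈ bΩ, vB (x, t) = 0)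
    (hrΓ : ∀ t ∈ Set.Ioo 0 T, ∀ x ∈ Γ t,
      vA (x, t) ⬝ᵥ nΓ (x, t) = vS (x, t) ⬝ᵥ nΓ (x, t)
        ∧ vB (x, t) ⬝ᵥ nΓ (x, t) = vS (x, t) ⬝ᵥ nΓ (x, t)
        ∧ vA (x, t) - (vA (x, t) ⬝ᵥ nΓ (x, t)) • nΓ (x, t) = 0
        ∧ vB (x, t) - (vB (x, t) ⬝ᵥ nΓ (x, t)) • nΓ (x, t) = 0) :
    ∀ t₁ t₂ : ℝ, 0 < t₁ → t₁ < t₂ → t₂ < T →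
      mA t₂ + mB t₂ + ρ₀ * σ t₂ = mA t₁ + mB t₁ + ρ₀ * σ t₁ := by
  intro t₁ t₂ h1 h12 h2T
  -- the total "mass" function has zero derivative on (0,T)
  have key : ∀ t ∈ Set.Ioo 0 T, HasDerivAt (fun t => mA t + mB t + ρ₀ * σ t) 0 t := by
    intro t ht
    have hdF : HasDerivAt (fun t => mA t + mB t + ρ₀ * σ t)
        ((∫ x in ΩA t, matD vA ρA (x, t))
          + (∫ x in ΩB t, (matD vB ρB (x, t) + divx vB (x, t) * ρB (x, t)))
          + ρ₀ * (∫ x in Γ t, sdivx nΓ vS (x, t) ∂μH[2])) t :=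
      ((htrA t ht).add (htrB t ht)).add ((htrS t ht).const_mul ρ₀)
    -- pointwise identity on the interface
    have hptΓ : ∀ x ∈ Γ t,
        (-(ρ₀ / π₀)) * ((TA (x, t) *ᵥ vA (x, t)) ⬝ᵥ nΓ (x, t))
          + ((ρ₀ / π₀) * ((TB (x, t) *ᵥ vB (x, t)) ⬝ᵥ nΓ (x, t))
            + (-ρ₀) * (HΓ (x, t) * (vS (x, t) ⬝ᵥ nΓ (x, t)))) = 0 := by
      intro x hx
      obtain ⟨heq, hn⟩ := heqΓ t ht x hx
      obtain ⟨hA, hB, hPA, hPB⟩ := hrΓ t ht x hx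
      set p : Pt := (x, t) with hp
      set n := nΓ p with hndef
      set s := vS p ⬝ᵥ n with hs
      have hvAe : vA p = s • n := by
        have := sub_eq_zero.mp hPA
        rw [this, hA]
      have hvBe : vB p = s • n := by
        have := sub_eq_zero.mp hPB
        rw [this, hB]
      have hTAq : (TA p *ᵥ n) ⬝ᵥ n = tTA p := by
        rw [hTA, htTA, Matrix.sub_mulVec, Matrix.smul_mulVec, Matrix.smul_mulVec,
          Matrix.one_mulVec, sub_dotProduct, smul_dotProduct,
          smul_dotProduct, quad_strain, hn]
        simp [smul_eq_mul]
        exact Or.inl rfl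
      have hTBq : (TB p *ᵥ n) ⬝ᵥ n = tTB p := by
        rw [hTB, htTB, Matrix.sub_mulVec, Matrix.add_mulVec, Matrix.smul_mulVec,
          Matrix.smul_mulVec, Matrix.smul_mulVec, Matrix.one_mulVec,
          sub_dotProduct, add_dotProduct, smul_dotProduct,
          smul_dotProduct, smul_dotProduct, quad_strain, hn]
        simp [smul_eq_mul]
        exact Or.inl rfl
      have hcoef : π₀ * HΓ p + tTA p - tTB p = 0 := by
        have h0 : (π₀ * HΓ p + tTA p - tTB p) • n = 0 := by
          rw [← add_smul, ← sub_smul] at heq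
          exact heq
        have h1 := congrArg (fun w => w ⬝ᵥ n) h0
        simpa [smul_dotProduct, hn, smul_eq_mul] using h1
      have hAv : (TA p *ᵥ vA p) ⬝ᵥ n = s * ((TA p *ᵥ n) ⬝ᵥ n) := by
        rw [hvAe, Matrix.mulVec_smul, smul_dotProduct]; rfl
      have hBv : (TB p *ᵥ vB p) ⬝ᵥ n = s * ((TB p *ᵥ n) ⬝ᵥ n) := by
        rw [hvBe, Matrix.mulVec_smul, smul_dotProduct]; rfl
      have htt : tTA p = tTB p - π₀ * HΓ p := by linarith
      rw [hAv, hBv, hTAq, hTBq, htt]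
      field_simp
      ring
    -- combine the surface integrals
    have hJ : ∫ x in Γ t,
        ((-(ρ₀ / π₀)) * ((TA (x, t) *ᵥ vA (x, t)) ⬝ᵥ nΓ (x, t))
          + ((ρ₀ / π₀) * ((TB (x, t) *ᵥ vB (x, t)) ⬝ᵥ nΓ (x, t))
            + (-ρ₀) * (HΓ (x, t) * (vS (x, t) ⬝ᵥ nΓ (x, t))))) ∂μH[2] = 0 :=
      setIntegral_eq_zero_of_forall_eq_zero hptΓ
    have i1 : Integrable (fun x => (-(ρ₀ / π₀)) * ((TA (x, t) *ᵥ vA (x, t)) ⬝ᵥ nΓ (x, t)))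
        (μH[2].restrict (Γ t)) := (hiΓA t ht).const_mul _
    have i2 : Integrable (fun x => (ρ₀ / π₀) * ((TB (x, t) *ᵥ vB (x, t)) ⬝ᵥ nΓ (x, t)))
        (μH[2].restrict (Γ t)) := (hiΓB t ht).const_mul _
    have i3 : Integrable (fun x => (-ρ₀) * (HΓ (x, t) * (vS (x, t) ⬝ᵥ nΓ (x, t))))
        (μH[2].restrict (Γ t)) := (hiΓ' t ht).const_mul _
    have i23 : Integrable (fun x => (ρ₀ / π₀) * ((TB (x, t) *ᵥ vB (x, t)) ⬝ᵥ nΓ (x, t))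
        + (-ρ₀) * (HΓ (x, t) * (vS (x, t) ⬝ᵥ nΓ (x, t)))) (μH[2].restrict (Γ t)) := i2.add i3
    rw [integral_add i1 i23, integral_add i2 i3,
      integral_const_mul, integral_const_mul, integral_const_mul] at hJ
    -- boundary term vanishes
    have hbd : ∫ x in bΩ, (TB (x, t) *ᵥ vB (x, t)) ⬝ᵥ nΩ (x, t) ∂μH[2] = 0 := by
      refine setIntegral_eq_zero_of_forall_eq_zero fun x hx => ?_
      rw [hrΩ t ht x hx]
      simp [Matrix.mulVec_zero]
    -- compute each bulk/surface derivative term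
    have hIA : (∫ x in ΩA t, matD vA ρA (x, t))
        = -(ρ₀ / π₀) * ∫ x in Γ t, (TA (x, t) *ᵥ vA (x, t)) ⬝ᵥ nΓ (x, t) ∂μH[2] := by
      rw [setIntegral_congr_fun (hΩAm t ht) (fun x hx => heqA t ht x hx),
        integral_const_mul, hdtA t ht]
    have hIB : (∫ x in ΩB t, (matD vB ρB (x, t) + divx vB (x, t) * ρB (x, t)))
        = (ρ₀ / π₀) * ∫ x in Γ t, (TB (x, t) *ᵥ vB (x, t)) ⬝ᵥ nΓ (x, t) ∂μH[2] := by
      rw [setIntegral_congr_fun (hΩBm t ht) (fun x hx => heqB t ht x hx),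
        integral_const_mul, hdtB t ht, hbd]
      ring
    have hIS : (∫ x in Γ t, sdivx nΓ vS (x, t) ∂μH[2])
        = -∫ x in Γ t, HΓ (x, t) * (vS (x, t) ⬝ᵥ nΓ (x, t)) ∂μH[2] := hsdt t ht
    have hz : (∫ x in ΩA t, matD vA ρA (x, t))
        + (∫ x in ΩB t, (matD vB ρB (x, t) + divx vB (x, t) * ρB (x, t)))
        + ρ₀ * (∫ x in Γ t, sdivx nΓ vS (x, t) ∂μH[2]) = 0 := by
      rw [hIA, hIB, hIS]
      linarith [hJ]
    exact hz ▸ hdF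
  -- constancy on [t₁, t₂]
  have hsub : Set.Icc t₁ t₂ ⊆ Set.Ioo 0 T := fun x hx =>
    ⟨lt_of_lt_of_le h1 hx.1, lt_of_le_of_lt hx.2 h2T⟩
  have hconst := constant_of_has_deriv_right_zero
    (f := fun t => mA t + mB t + ρ₀ * σ t) (a := t₁) (b := t₂)
    (fun x hx => (key x (hsub hx)).continuousAt.continuousWithinAt)
    (fun x hx => (key x (hsub ⟨hx.1, le_of_lt hx.2⟩)).hasDerivWithinAt)
  simpa using hconst t₂ ⟨le_of_lt h12, le_refl _⟩
end
end
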